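/- The adjoint projection I_K^{d^k} : HΛ^k(K) → P_1^-Λ^k(K), defined by requiring ⟨d^k I_K ω, μ⟩ − ⟨I_K ω, δ_{k+1} μ⟩ = ⟨d^k ω, μ⟩ − ⟨ω, δ_{k+1} μ⟩ for all μ ∈ P_1^{*,-}Λ^{k+1}, is well-defined: the linear system determining I_K^{d^k} ω has a unique solution in P_1^-Λ^k(K). -/

import Mathlib

open MvPolynomial Finset MeasureTheory

/-- Strictly increasing `k`-indices in `{1,…,n}`, modelled as `k`-element subsets of `Fin n`. -/
abbrev Idx (n k : ℕ) := {s : Finset (Fin n) // s.card = k}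

/-- A differential `k`-form with polynomial coefficients on `ℝⁿ`:
one polynomial coefficient for each increasing `k`-index. -/
abbrev Form (n k : ℕ) := Idx n k → MvPolynomial (Fin n) ℝ

/-- The sign `(-1)^{#\{j ∈ s : j < i\}}`. -/
noncomputable def sgn {n : ℕ} (s : Finset (Fin n)) (i : Fin n) : ℝ :=
  (-1) ^ (s.filter (· < i)).card

def eraseIdx {n k : ℕ} (s : Idx n (k+1)) {i : Fin n} (hi : i ∈ s.1) : Idx n k :=
  ⟨s.1.erase i, by simp [Finset.card_erase_of_mem hi, s.2]⟩

def insertIdx {n k : ℕ} (s : Idx n k) {i : Fin n} (hi : i ∉ s.1) : Idx n (k+1) :=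
  ⟨insert i s.1, by simp [Finset.card_insert_of_notMem hi, s.2]⟩

/-- The exterior derivative `d^k`. -/
noncomputable def extd (n k : ℕ) : Form n k →ₗ[ℝ] Form n (k+1) where
  toFun ω := fun s => ∑ i ∈ s.1.attach, sgn s.1 i.1 • pderiv i.1 (ω (eraseIdx s i.2))
  map_add' ω η := by
    funext s
    simp [Finset.sum_add_distrib, smul_add]
  map_smul' c ω := by
    funext s
    simp only [Pi.smul_apply, RingHom.id_apply]
    rw [Finset.smul_sum]
    exact Finset.sum_congr rfl (fun i _ => by rw [(pderiv i.1).map_smul, smul_comm])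

/-- The Koszul operator `κ` (contraction with the position vector field). -/
noncomputable def koszul (n k : ℕ) : Form n (k+1) →ₗ[ℝ] Form n k where
  toFun ω := fun s =>
    ∑ i ∈ (s.1ᶜ).attach, sgn s.1 i.1 • (X i.1 * ω (insertIdx s (Finset.mem_compl.mp i.2)))
  map_add' ω η := by
    funext s
    simp [Finset.sum_add_distrib, mul_add, smul_add]
  map_smul' c ω := by
    funext s
    simp only [Pi.smul_apply, RingHom.id_apply, mul_smul_comm]
    rw [Finset.smul_sum]
    exact Finset.sum_congr rfl (fun i _ => (smul_comm _ _ _))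

/-- The codifferential `δ_{k+1}` (the formal adjoint of `d^k` on Euclidean `ℝⁿ`,
which coincides with `(-1)^{(k+1)n} ⋆ d^{n-k-1} ⋆`). -/
noncomputable def codiff (n k : ℕ) : Form n (k+1) →ₗ[ℝ] Form n k where
  toFun ω := fun s =>
    -∑ i ∈ (s.1ᶜ).attach, sgn s.1 i.1 • pderiv i.1 (ω (insertIdx s (Finset.mem_compl.mp i.2)))
  map_add' ω η := by
    funext s
    simp [Finset.sum_add_distrib, smul_add]
    ring
  map_smul' c ω := by
    funext s
    simp only [Pi.smul_apply, RingHom.id_apply, smul_neg, neg_inj]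
    rw [Finset.smul_sum]
    exact Finset.sum_congr rfl (fun i _ => by rw [(pderiv i.1).map_smul, smul_comm])

/-- The operator `κ^δ = ⋆ ∘ κ ∘ ⋆` (exterior multiplication by `Σ xᵢ dxⁱ`, up to sign). -/
noncomputable def kappaDelta (n k : ℕ) : Form n k →ₗ[ℝ] Form n (k+1) where
  toFun ω := fun s => ∑ i ∈ s.1.attach, sgn s.1 i.1 • (X i.1 * ω (eraseIdx s i.2))
  map_add' ω η := by
    funext s
    simp [Finset.sum_add_distrib, mul_add, smul_add]
  map_smul' c ω := by
    funext s
    simp only [Pi.smul_apply, RingHom.id_apply, mul_smul_comm]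
    rw [Finset.smul_sum]
    exact Finset.sum_congr rfl (fun i _ => (smul_comm _ _ _))

/-- Sign of the permutation `(t, tᶜ) ↦ (1,…,n)`, i.e. `⋆ dx^t = starSign t · dx^{tᶜ}`. -/
noncomputable def starSign {n : ℕ} (t : Finset (Fin n)) : ℝ :=
  (-1) ^ (∑ i ∈ t, ((tᶜ).filter (· < i)).card)

/-- The Hodge star operator on `k`-forms on `ℝⁿ`, `k + l = n`. -/
noncomputable def hodge (n k l : ℕ) (h : k + l = n) : Form n k →ₗ[ℝ] Form n l where
  toFun ω := fun s => starSign (s.1ᶜ) •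
    ω ⟨s.1ᶜ, by rw [Finset.card_compl, s.2, Fintype.card_fin]; omega⟩
  map_add' ω η := by funext s; simp [smul_add]
  map_smul' c ω := by funext s; simp only [Pi.smul_apply, RingHom.id_apply]; rw [smul_comm]

/-- The monomial form `x_τ dx^σ`. -/
noncomputable def monForm (n k : ℕ) (τ : Finset (Fin n)) (σ : Idx n k) : Form n k :=
  fun s => if s = σ then ∏ i ∈ τ, X i else 0

/-- `Q_1^-Λ^k = span{ x_τ dx^σ : |σ| = k, 0 ≤ |τ| ≤ n-k, τ ⊆ σᶜ }`. -/
noncomputable def Qm (n k : ℕ) : Submodule ℝ (Form n k) :=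
  Submodule.span ℝ
    {ω | ∃ (τ : Finset (Fin n)) (σ : Idx n k), τ.card ≤ n - k ∧ τ ⊆ (σ.1)ᶜ ∧ ω = monForm n k τ σ}

/-- `Q_1^{*,-}Λ^k = span{ x_τ' dx^σ' : |σ'| = k, 0 ≤ |τ'| ≤ k, τ' ⊆ σ' }`. -/
noncomputable def Qs (n k : ℕ) : Submodule ℝ (Form n k) :=
  Submodule.span ℝ
    {ω | ∃ (τ : Finset (Fin n)) (σ : Idx n k), τ.card ≤ k ∧ τ ⊆ σ.1 ∧ ω = monForm n k τ σ}

/-- `P_0Λ^k`: forms with constant coefficients. -/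
noncomputable def P0 (n k : ℕ) : Submodule ℝ (Form n k) :=
  Submodule.span ℝ {ω | ∃ σ : Idx n k, ω = monForm n k ∅ σ}

/-- The Whitney space `P_1^-Λ^k = P_0Λ^k + κ(P_0Λ^{k+1})`. -/
noncomputable def Pm (n k : ℕ) : Submodule ℝ (Form n k) :=
  P0 n k ⊔ Submodule.map (koszul n k) (P0 n (k+1))

/-- The star Whitney space `P_1^{*,-}Λ^{k+1} = P_0Λ^{k+1} + κ^δ(P_0Λ^k)`. -/
noncomputable def PsS (n k : ℕ) : Submodule ℝ (Form n (k+1)) :=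
  P0 n (k+1) ⊔ Submodule.map (kappaDelta n k) (P0 n k)

/-- `L²` inner product of `k`-forms on the centered box `[-r, r]`. -/
noncomputable def binner (n k : ℕ) (r : Fin n → ℝ) (ω η : Form n k) : ℝ :=
  ∑ s : Idx n k, ∫ x in Set.Icc (fun i => -(r i)) r, eval x (ω s * η s)

/-- `L²` inner product of `k`-forms on the reference cube `T = [-1,1]ⁿ`. -/
noncomputable def finner (n k : ℕ) (ω η : Form n k) : ℝ :=
  binner n k (fun _ => (1 : ℝ)) ω η

/-! Write `η = a + κ b` and `μ = b' + κ^δ a'` with constant forms `a, a', b, b'`. Since `d` and `δ`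
kill constants while `d κ = k + 1` and `δ κ^δ = -(n - k)` on them, the pairing
`⟨d η, μ⟩ - ⟨η, δ μ⟩` equals `(k+1)|K| b·b' + (n-k)|K| a·a'` plus a term depending only on `b`
and `a'`. The linear system for `(a, b)` is thus block triangular with invertible diagonal blocks
(`n - k ≥ 1`): the tests against `P_0Λ^{k+1}` determine `b`, and then the tests against
`κ^δ P_0Λ^k` determine `a`. -/

section Integration

variable {n : ℕ}

noncomputable def polyIntegral (r : Fin n → ℝ) : MvPolynomial (Fin n) ℝ →ₗ[ℝ] ℝ where
  toFun p := ∫ x in Set.Icc (fun i => -(r i)) r, eval x p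
  map_add' p q := by
    simp only [map_add]
    exact integral_add ((continuous_eval p).continuousOn.integrableOn_compact isCompact_Icc)
      ((continuous_eval q).continuousOn.integrableOn_compact isCompact_Icc)
  map_smul' c p := by
    simp only [smul_eval, RingHom.id_apply, smul_eq_mul]
    exact integral_const_mul c _

lemma polyIntegral_C (r : Fin n → ℝ) (c : ℝ) :
    polyIntegral r (C c) = volume.real (Set.Icc (fun i => -(r i)) r) * c := by
  simp [polyIntegral]

lemma volume_real_Icc_neg_pos {r : Fin n → ℝ} (hr : ∀ i, 0 < r i) :
    0 < volume.real (Set.Icc (fun i => -(r i)) r) := by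
  rw [measureReal_def, Real.volume_Icc_pi_toReal fun i => by linarith [hr i]]
  exact prod_pos fun i _ => by linarith [hr i]

end Integration

noncomputable def binnerₗ (n k : ℕ) (r : Fin n → ℝ) : Form n k →ₗ[ℝ] Form n k →ₗ[ℝ] ℝ :=
  ∑ s : Idx n k, ((LinearMap.mul ℝ _).compr₂ (polyIntegral r)).compl₁₂
    (LinearMap.proj s) (LinearMap.proj s)

lemma binnerₗ_apply (n k : ℕ) (r : Fin n → ℝ) (ω η : Form n k) :
    binnerₗ n k r ω η = binner n k r ω η := by
  simp [binnerₗ, binner, polyIntegral]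

noncomputable def constForm (n k : ℕ) : (Idx n k → ℝ) →ₗ[ℝ] Form n k where
  toFun a s := C (a s)
  map_add' a b := by ext1 s; simp
  map_smul' c a := by ext1 s; simp [smul_eq_C_mul]

@[simp] lemma constForm_apply {n k : ℕ} (a : Idx n k → ℝ) (s : Idx n k) :
    constForm n k a s = C (a s) := rfl

lemma binnerₗ_constForm (n k : ℕ) (r : Fin n → ℝ) (a b : Idx n k → ℝ) :
    binnerₗ n k r (constForm n k a) (constForm n k b) =
      volume.real (Set.Icc (fun i => -(r i)) r) * (a ⬝ᵥ b) := by
  simp only [binnerₗ_apply, binner, constForm_apply, ← C_mul, dotProduct, mul_sum]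
  exact sum_congr rfl fun s _ => polyIntegral_C r _

lemma P0_eq_range (n k : ℕ) : P0 n k = LinearMap.range (constForm n k) := by
  have hmon : ∀ σ, monForm n k ∅ σ = constForm n k (Pi.single σ 1) := fun σ => by
    ext1 s; by_cases h : s = σ <;> simp [monForm, h]
  apply le_antisymm
  · rw [P0, Submodule.span_le]
    rintro _ ⟨σ, rfl⟩
    exact ⟨_, (hmon σ).symm⟩
  · rintro _ ⟨a, rfl⟩
    rw [pi_eq_sum_univ' a, map_sum]
    refine Submodule.sum_mem _ fun σ _ => ?_
    rw [map_smul, ← hmon]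
    exact Submodule.smul_mem _ _ (Submodule.subset_span ⟨σ, rfl⟩)

lemma mem_Pm_iff {n k : ℕ} {η : Form n k} :
    η ∈ Pm n k ↔ ∃ a b, constForm n k a + koszul n k (constForm n (k+1) b) = η := by
  simp only [Pm, P0_eq_range, Submodule.mem_sup, LinearMap.mem_range, Submodule.mem_map]
  constructor
  · rintro ⟨_, ⟨a, rfl⟩, _, ⟨_, ⟨b, rfl⟩, rfl⟩, rfl⟩
    exact ⟨a, b, rfl⟩
  · rintro ⟨a, b, rfl⟩
    exact ⟨_, ⟨a, rfl⟩, _, ⟨_, ⟨b, rfl⟩, rfl⟩, rfl⟩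

lemma mem_PsS_iff {n k : ℕ} {μ : Form n (k+1)} :
    μ ∈ PsS n k ↔ ∃ b a, constForm n (k+1) b + kappaDelta n k (constForm n k a) = μ := by
  simp only [PsS, P0_eq_range, Submodule.mem_sup, LinearMap.mem_range, Submodule.mem_map]
  constructor
  · rintro ⟨_, ⟨b, rfl⟩, _, ⟨_, ⟨a, rfl⟩, rfl⟩, rfl⟩
    exact ⟨b, a, rfl⟩
  · rintro ⟨b, a, rfl⟩
    exact ⟨_, ⟨b, rfl⟩, _, ⟨_, ⟨a, rfl⟩, rfl⟩, rfl⟩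

lemma sgn_erase {n : ℕ} (s : Finset (Fin n)) (i : Fin n) : sgn (s.erase i) i = sgn s i := by
  simp only [sgn, filter_erase, erase_eq_of_notMem (by simp : i ∉ s.filter (· < i))]

lemma sgn_insert {n : ℕ} (s : Finset (Fin n)) (i : Fin n) : sgn (insert i s) i = sgn s i := by
  rw [sgn, sgn, filter_insert, if_neg (lt_irrefl i)]

lemma sgn_mul_self {n : ℕ} (s : Finset (Fin n)) (i : Fin n) : sgn s i * sgn s i = 1 := by
  rw [sgn, ← mul_pow]; norm_num

lemma pderiv_X_mul_C {n : ℕ} (i j : Fin n) (c : ℝ) :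
    pderiv i (X j * C c) = if j = i then C c else 0 := by
  by_cases h : j = i <;> simp [h, pderiv_X]

lemma extd_constForm (n k : ℕ) (a : Idx n k → ℝ) : extd n k (constForm n k a) = 0 := by
  ext1 s; simp [extd]

lemma codiff_constForm (n k : ℕ) (b : Idx n (k+1) → ℝ) :
    codiff n k (constForm n (k+1) b) = 0 := by
  ext1 s; simp [codiff]

lemma pderiv_koszul_constForm {n k : ℕ} (b : Idx n (k+1) → ℝ) (s : Idx n (k+1)) {i : Fin n}
    (hi : i ∈ s.1) :
    pderiv i (koszul n k (constForm n (k+1) b) (eraseIdx s hi)) = sgn s.1 i • C (b s) := by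
  have hi' : i ∈ (eraseIdx s hi).1ᶜ := by simp [eraseIdx]
  simp only [koszul, LinearMap.coe_mk, AddHom.coe_mk, map_sum, Derivation.map_smul,
    constForm_apply, pderiv_X_mul_C]
  rw [sum_eq_single_of_mem ⟨i, hi'⟩ (mem_attach _ _) fun j _ hj => by
    rw [if_neg fun h => hj (Subtype.ext h), smul_zero]]
  simp [eraseIdx, insertIdx, sgn_erase, insert_erase hi]

lemma pderiv_kappaDelta_constForm {n k : ℕ} (a : Idx n k → ℝ) (s : Idx n k) {i : Fin n}
    (hi : i ∉ s.1) :
    pderiv i (kappaDelta n k (constForm n k a) (insertIdx s hi)) = sgn s.1 i • C (a s) := by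
  have hi' : i ∈ (insertIdx s hi).1 := mem_insert_self i s.1
  simp only [kappaDelta, LinearMap.coe_mk, AddHom.coe_mk, map_sum, Derivation.map_smul,
    constForm_apply, pderiv_X_mul_C]
  rw [sum_eq_single_of_mem ⟨i, hi'⟩ (mem_attach _ _) fun j _ hj => by
    rw [if_neg fun h => hj (Subtype.ext h), smul_zero]]
  simp [eraseIdx, insertIdx, sgn_insert, erase_insert hi]

lemma extd_koszul_constForm (n k : ℕ) (b : Idx n (k+1) → ℝ) :
    extd n k (koszul n k (constForm n (k+1) b)) = ((k:ℝ) + 1) • constForm n (k+1) b := by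
  ext1 s
  simp only [extd, LinearMap.coe_mk, AddHom.coe_mk, pderiv_koszul_constForm, smul_smul,
    sgn_mul_self, one_smul, sum_const, card_attach, s.2]
  simp [← Nat.cast_smul_eq_nsmul ℝ]

lemma codiff_kappaDelta_constForm (n k : ℕ) (a : Idx n k → ℝ) :
    codiff n k (kappaDelta n k (constForm n k a)) = -((n - k : ℕ) : ℝ) • constForm n k a := by
  ext1 s
  have hcard : (s.1ᶜ).card = n - k := by rw [card_compl, s.2, Fintype.card_fin]
  simp only [codiff, LinearMap.coe_mk, AddHom.coe_mk, pderiv_kappaDelta_constForm, smul_smul,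
    sgn_mul_self, one_smul, sum_const, card_attach, hcard]
  simp [← Nat.cast_smul_eq_nsmul ℝ]

lemma exists_mul_dotProduct_eq {ι : Type*} [Fintype ι] {c : ℝ} (hc : c ≠ 0)
    (g : Module.Dual ℝ (ι → ℝ)) : ∃ v, ∀ w, c * (v ⬝ᵥ w) = g w := by
  classical
  refine ⟨(dotProductEquiv ℝ ι).symm (c⁻¹ • g), fun w => ?_⟩
  have h := LinearMap.congr_fun ((dotProductEquiv ℝ ι).apply_symm_apply (c⁻¹ • g)) w
  rw [dotProductEquiv_apply_apply] at h
  rw [h, LinearMap.smul_apply, smul_eq_mul, mul_inv_cancel_left₀ hc]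

noncomputable def adjPairing (n k : ℕ) (r : Fin n → ℝ) :
    Form n k →ₗ[ℝ] Form n (k+1) →ₗ[ℝ] ℝ :=
  (binnerₗ n (k+1) r).comp (extd n k) - (binnerₗ n k r).compl₂ (codiff n k)

lemma adjPairing_apply (n k : ℕ) (r : Fin n → ℝ) (α : Form n k) (μ : Form n (k+1)) :
    adjPairing n k r α μ = binner n (k+1) r (extd n k α) μ - binner n k r α (codiff n k μ) := by
  simp [adjPairing, binnerₗ_apply]

section AdjPairingBlocks

variable (n k : ℕ) (r : Fin n → ℝ)

lemma adjPairing_constForm_constForm (a : Idx n k → ℝ) (b : Idx n (k+1) → ℝ) :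
    adjPairing n k r (constForm n k a) (constForm n (k+1) b) = 0 := by
  simp [adjPairing, extd_constForm, codiff_constForm]

lemma adjPairing_koszul_constForm (b b' : Idx n (k+1) → ℝ) :
    adjPairing n k r (koszul n k (constForm n (k+1) b)) (constForm n (k+1) b') =
      ((k:ℝ) + 1) * volume.real (Set.Icc (fun i => -(r i)) r) * (b ⬝ᵥ b') := by
  simp [adjPairing, extd_koszul_constForm, codiff_constForm, binnerₗ_constForm, mul_assoc]

lemma adjPairing_constForm_kappaDelta (a a' : Idx n k → ℝ) :
    adjPairing n k r (constForm n k a) (kappaDelta n k (constForm n k a')) =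
      ((n - k : ℕ) : ℝ) * volume.real (Set.Icc (fun i => -(r i)) r) * (a ⬝ᵥ a') := by
  simp [adjPairing, extd_constForm, codiff_kappaDelta_constForm, binnerₗ_constForm]
  ring

end AdjPairingBlocks

section WellPosed

variable {n k : ℕ} {r : Fin n → ℝ}

lemma eq_zero_of_mem_Pm_of_adjPairing_eq_zero (hk : k + 1 ≤ n) (hr : ∀ i, 0 < r i)
    {η : Form n k} (hη : η ∈ Pm n k) (h : ∀ μ ∈ PsS n k, adjPairing n k r η μ = 0) :
    η = 0 := by
  obtain ⟨a, b, rfl⟩ := mem_Pm_iff.1 hη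
  have hvol := (volume_real_Icc_neg_pos hr).ne'
  have hnk : ((n - k : ℕ) : ℝ) ≠ 0 := by norm_cast; omega
  have hb : b = 0 := by
    have hμ := h (constForm n (k+1) b) (mem_PsS_iff.2 ⟨b, 0, by simp⟩)
    rw [map_add, LinearMap.add_apply, adjPairing_constForm_constForm,
      adjPairing_koszul_constForm, zero_add] at hμ
    exact dotProduct_self_eq_zero.1 <| by simpa [hvol, Nat.cast_add_one_ne_zero] using hμ
  subst hb
  have ha : a = 0 := by
    have hμ := h (kappaDelta n k (constForm n k a)) (mem_PsS_iff.2 ⟨0, a, by simp⟩)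
    rw [map_zero, map_zero, add_zero, adjPairing_constForm_kappaDelta] at hμ
    exact dotProduct_self_eq_zero.1 <| by simpa [hvol, hnk] using hμ
  simp [ha]

lemma exists_mem_Pm_adjPairing_eq (hk : k + 1 ≤ n) (hr : ∀ i, 0 < r i)
    (f : Form n (k+1) →ₗ[ℝ] ℝ) : ∃ η ∈ Pm n k, ∀ μ ∈ PsS n k, adjPairing n k r η μ = f μ := by
  have hvol := (volume_real_Icc_neg_pos hr).ne'
  have hnk : ((n - k : ℕ) : ℝ) ≠ 0 := by norm_cast; omega
  obtain ⟨b, hb⟩ := exists_mul_dotProduct_eq (mul_ne_zero (Nat.cast_add_one_ne_zero k) hvol)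
    (f ∘ₗ constForm n (k+1))
  obtain ⟨a, ha⟩ := exists_mul_dotProduct_eq (mul_ne_zero hnk hvol)
    ((f - adjPairing n k r (koszul n k (constForm n (k+1) b))) ∘ₗ kappaDelta n k ∘ₗ constForm n k)
  refine ⟨constForm n k a + koszul n k (constForm n (k+1) b), mem_Pm_iff.2 ⟨a, b, rfl⟩, ?_⟩
  rintro μ hμ
  obtain ⟨b', a', rfl⟩ := mem_PsS_iff.1 hμ
  simp only [map_add, LinearMap.add_apply, adjPairing_constForm_constForm,
    adjPairing_koszul_constForm, adjPairing_constForm_kappaDelta, hb, ha, LinearMap.comp_apply,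
    LinearMap.sub_apply]
  ring

lemma existsUnique_mem_Pm_adjPairing_eq (hk : k + 1 ≤ n) (hr : ∀ i, 0 < r i)
    (f : Form n (k+1) →ₗ[ℝ] ℝ) :
    ∃! η : Form n k, η ∈ Pm n k ∧ ∀ μ ∈ PsS n k, adjPairing n k r η μ = f μ := by
  obtain ⟨η, hη, hηf⟩ := exists_mem_Pm_adjPairing_eq hk hr f
  refine ⟨η, ⟨hη, hηf⟩, fun η' ⟨hη', hη'f⟩ => sub_eq_zero.1 ?_⟩
  refine eq_zero_of_mem_Pm_of_adjPairing_eq_zero hk hr (sub_mem hη' hη) fun μ hμ => ?_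
  rw [map_sub, LinearMap.sub_apply, hη'f μ hμ, hηf μ hμ, sub_self]

end WellPosed

/-- well-posedness of the adjoint projection, eq. (2.5). On the cube
`K = [-1,1]ⁿ`, for every `k`-form `ω` there exists a unique `η ∈ P_1^-Λ^k(K)` such that
`⟨d^k η, μ⟩ - ⟨η, δ_{k+1} μ⟩ = ⟨d^k ω, μ⟩ - ⟨ω, δ_{k+1} μ⟩` for all `μ ∈ P_1^{*,-}Λ^{k+1}(K)`;
i.e. the linear system determining `I_K^{d^k} ω` has a unique solution. -/
theorem stmt10 (n k : ℕ) (hk : k + 1 ≤ n) (ω : Form n k) :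
    ∃! η : Form n k, η ∈ Pm n k ∧ ∀ μ ∈ PsS n k,
      finner n (k+1) (extd n k η) μ - finner n k η (codiff n k μ)
        = finner n (k+1) (extd n k ω) μ - finner n k ω (codiff n k μ) := by
  simpa only [adjPairing_apply, finner] using
    existsUnique_mem_Pm_adjPairing_eq hk (fun _ => one_pos) (adjPairing n k (fun _ => 1) ω)
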